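/- Let λ ∈ (0,1) and C = (1-λ)^{-1} M for some M ≥ 0. Suppose F : I → ℝ is differentiable with |F'(y)| ≤ C for all y in an interval I, and G(y) = a(F(b⁻¹(y)), b⁻¹(y)) where b : I → J is a differentiable bijection with differentiable inverse, a : ℝ² → ℝ is differentiable, and for all (x,y) one has |∂ₓa(x,y)| ≤ λ|b'(y)| and |∂ᵧa(x,y)| ≤ M|b'(y)| with b'(y) ≠ 0. Then |G'(y)| ≤ C for all y ∈ b(I). -/

import Mathlib

/-!
Differentiate `G = a ∘ (F, 1) ∘ b⁻¹` by the chain rule: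
`G' = (b')⁻¹ (F' ∂ₓa + ∂ᵧa)`. The domination hypotheses bound this by
`|b'|⁻¹ (C λ |b'| + M |b'|) ≤ C λ + M`, and `C λ + M = C` is exactly the choice `C = (1 - λ)⁻¹ M`.
-/

theorem hasDerivAt_comp_graph {E : Type*} [NormedAddCommGroup E] [NormedSpace ℝ E]
    {a : ℝ × ℝ → E} {Da : ℝ × ℝ →L[ℝ] E} {F g : ℝ → ℝ} {F' g' y : ℝ}
    (ha : HasFDerivAt a Da (F (g y), g y)) (hF : HasDerivAt F F' (g y))
    (hg : HasDerivAt g g' y) :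
    HasDerivAt (fun t => a (F (g t), g t)) (g' • (F' • Da (1, 0) + Da (0, 1))) y := by
  have hpair : ((F' * g', g') : ℝ × ℝ) = g' • (F' • ((1, 0) : ℝ × ℝ) + (0, 1)) := by
    ext <;> simp [mul_comm]
  have := ha.comp_hasDerivAt y ((hF.comp y hg).prodMk hg)
  rwa [hpair, map_smul, map_add, map_smul] at this

theorem abs_inv_mul_mul_add_le {lam C M s u dx dy : ℝ} (hlam : lam < 1)
    (hC : C = (1 - lam)⁻¹ * M) (hu : |u| ≤ C) (hdx : |dx| ≤ lam * |s|)
    (hdy : |dy| ≤ M * |s|) :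
    |s⁻¹ * (u * dx + dy)| ≤ C := by
  have hC_eq : C * lam + M = C := by
    rw [hC]
    field_simp [(sub_pos.mpr hlam).ne']
    ring
  have hC_nonneg : 0 ≤ C := (abs_nonneg u).trans hu
  calc |s⁻¹ * (u * dx + dy)| ≤ |s|⁻¹ * (|u| * |dx| + |dy|) := by
        rw [abs_mul, abs_inv, ← abs_mul]
        gcongr
        exact abs_add_le _ _
    _ ≤ |s|⁻¹ * (C * (lam * |s|) + M * |s|) := by
        gcongr
    _ = (|s|⁻¹ * |s|) * (C * lam + M) := by ring
    _ ≤ C := by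
        rw [hC_eq]
        exact mul_le_of_le_one_left hC_nonneg inv_mul_le_one

theorem stmt_0_general (lam C M : ℝ) (hlam1 : lam < 1)
    (hC : C = (1 - lam)⁻¹ * M)
    (I : Set ℝ) (F F' b b' binv : ℝ → ℝ) (a : ℝ × ℝ → ℝ)
    (Da : ℝ × ℝ → (ℝ × ℝ →L[ℝ] ℝ))
    (hF : ∀ y ∈ I, HasDerivAt F (F' y) y)
    (hFC : ∀ y ∈ I, |F' y| ≤ C)
    (hbinvmem : ∀ y ∈ b '' I, binv y ∈ I)
    (hbinvderiv : ∀ y ∈ b '' I, HasDerivAt binv (b' (binv y))⁻¹ y)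
    (ha : ∀ p, HasFDerivAt a (Da p) p)
    (hax : ∀ p : ℝ × ℝ, |Da p (1, 0)| ≤ lam * |b' p.2|)
    (hay : ∀ p : ℝ × ℝ, |Da p (0, 1)| ≤ M * |b' p.2|) :
    ∀ y ∈ b '' I, |deriv (fun y => a (F (binv y), binv y)) y| ≤ C := by
  intro y hy
  have hz : binv y ∈ I := hbinvmem y hy
  rw [(hasDerivAt_comp_graph (ha _) (hF _ hz) (hbinvderiv y hy)).deriv]
  exact abs_inv_mul_mul_add_le hlam1 hC (hFC _ hz) (hax _) (hay _)

/-- Skew-product maps with domination transform vertical graphs of distortion ≤ C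
into vertical graphs of distortion ≤ C, where C = (1-λ)⁻¹ M. -/
theorem stmt_0 (lam C M : ℝ) (hlam0 : 0 < lam) (hlam1 : lam < 1) (hM : 0 ≤ M)
    (hC : C = (1 - lam)⁻¹ * M)
    (I : Set ℝ) (F F' b b' binv : ℝ → ℝ) (a : ℝ × ℝ → ℝ)
    (Da : ℝ × ℝ → (ℝ × ℝ →L[ℝ] ℝ))
    (hF : ∀ y ∈ I, HasDerivAt F (F' y) y)
    (hFC : ∀ y ∈ I, |F' y| ≤ C)
    (hb : ∀ y ∈ I, HasDerivAt b (b' y) y)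
    (hb0 : ∀ y ∈ I, b' y ≠ 0)
    (hbinvmem : ∀ y ∈ b '' I, binv y ∈ I)
    (hbinv : ∀ y ∈ b '' I, b (binv y) = y)
    (hbinvderiv : ∀ y ∈ b '' I, HasDerivAt binv (b' (binv y))⁻¹ y)
    (ha : ∀ p, HasFDerivAt a (Da p) p)
    (hax : ∀ p : ℝ × ℝ, |Da p (1, 0)| ≤ lam * |b' p.2|)
    (hay : ∀ p : ℝ × ℝ, |Da p (0, 1)| ≤ M * |b' p.2|) :
    ∀ y ∈ b '' I, |deriv (fun y => a (F (binv y), binv y)) y| ≤ C :=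
  stmt_0_general lam C M hlam1 hC I F F' b b' binv a Da hF hFC hbinvmem hbinvderiv ha hax hay
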